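/- For each k ≥ 2, in the (3k−1)-job instance above, the schedule assigning J1 to M1, J2 to M2, J3 to M1, and for 1 ≤ t ≤ k−2 assigning J_{3t+1} to M2 and J_{3t+2}, J_{3t+3} to M1, and J_{3k−2}, J_{3k−1} to M2, has makespan k+2. Consequently the ratio of this makespan to the optimal makespan is k+2 = (n+7)/3 where n = 3k−1, i.e., it grows linearly in n. -/

import Mathlib

/-!
Under `sSpeLin` every job other than `J1`, `J2` and the two final jobs sits on a machine where it
takes no time, so M1 carries only `J1` (load `k + 1`) and M2 carries `J2`, `J_{3k−2}` and
`J_{3k−1}` (load `k + 2`). The optimum is `1`: `J_{3k−2}` takes time `1` on either machine, and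
`sStarLin` attains `1` by sending `J_{3k−2}` and `J_{3k−1}` to different machines and every other
job to a machine where it takes no time.
-/

open Classical Finset

noncomputable section

/-- The `(3k − 1)`-job two-machine instance of the linear SPoA lower bound
(job `j` is 0-indexed: `J_{j+1}`; machine `i`: M1 = 0, M2 = 1). -/
def Plin (k : ℕ) : ℕ → Fin 2 → ℝ := fun j i =>
  if j = 0 then (if i = 0 then (k : ℝ) + 1 else 0)
  else if j ≤ 2 then (if i = 0 then 0 else (k : ℝ))
  else if j = 3*k - 3 then 1
  else if j = 3*k - 2 then (if i = 0 then 2 else 1)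
  else if j % 3 = 0 then (if i = 0 then (k : ℝ) - (j / 3 : ℕ) else 0)
  else (if i = 0 then 0 else (k : ℝ) - (j / 3 : ℕ) - 1)

/-- Load of machine `i` under schedule `s` for the first `n` jobs. -/
def fLoad (P : ℕ → Fin 2 → ℝ) (n : ℕ) (s : ℕ → Fin 2) (i : Fin 2) : ℝ :=
  ∑ j ∈ Finset.range n, if s j = i then P j i else 0

/-- Makespan of schedule `s`. -/
def fMk (P : ℕ → Fin 2 → ℝ) (n : ℕ) (s : ℕ → Fin 2) : ℝ :=
  max (fLoad P n s 0) (fLoad P n s 1)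

/-- Optimal makespan. -/
def optMk (P : ℕ → Fin 2 → ℝ) (n : ℕ) : ℝ := ⨅ s : ℕ → Fin 2, fMk P n s

/-- The subgame-perfect-equilibrium schedule: J1 → M1, J2 → M2, J3 → M1;
for 1 ≤ t ≤ k−2: J_{3t+1} → M2 and J_{3t+2}, J_{3t+3} → M1;
J_{3k−2}, J_{3k−1} → M2. -/
def sSpeLin (k : ℕ) : ℕ → Fin 2 := fun j =>
  if j = 0 then 0
  else if j = 1 then 1
  else if j = 2 then 0
  else if j = 3*k - 3 then 1
  else if j = 3*k - 2 then 1
  else if j % 3 = 0 then 1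
  else 0

section Schedules

variable {P : ℕ → Fin 2 → ℝ} {n : ℕ}

lemma fLoad_eq_sum_of_support (s : ℕ → Fin 2) (i : Fin 2) {T : Finset ℕ} (hT : T ⊆ range n)
    (hzero : ∀ j < n, j ∉ T → P j (s j) = 0) :
    fLoad P n s i = ∑ j ∈ T, if s j = i then P j i else 0 := by
  refine (Finset.sum_subset hT fun j hj hjT => ?_).symm
  split_ifs with hs
  · exact hs ▸ hzero j (mem_range.mp hj) hjT
  · rfl

lemma fLoad_le_fMk (s : ℕ → Fin 2) : ∀ i, fLoad P n s i ≤ fMk P n s :=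
  Fin.forall_fin_two.mpr ⟨le_max_left _ _, le_max_right _ _⟩

lemma apply_le_fMk (hP : ∀ j < n, ∀ i, 0 ≤ P j i) (s : ℕ → Fin 2) {j : ℕ} (hj : j < n) :
    P j (s j) ≤ fMk P n s := by
  have hload : P j (s j) ≤ fLoad P n s (s j) := by
    have hnonneg : ∀ j' ∈ range n, 0 ≤ if s j' = s j then P j' (s j) else 0 := fun j' hj' => by
      split_ifs
      exacts [hP j' (mem_range.mp hj') _, le_rfl]
    simpa [fLoad] using Finset.single_le_sum hnonneg (mem_range.mpr hj)
  exact hload.trans (fLoad_le_fMk s _)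

lemma optMk_eq_of_isLeast {c : ℝ} (h : IsLeast (Set.range (fMk P n)) c) : optMk P n = c :=
  h.csInf_eq

end Schedules

def sStarLin (k : ℕ) : ℕ → Fin 2 := fun j =>
  if j = 3*k - 3 then 0
  else if j = 3*k - 2 then 1
  else if j % 3 = 0 then 1
  else 0

variable {k : ℕ}

lemma Plin_nonneg (hk : 2 ≤ k) : ∀ j < 3*k - 1, ∀ i, 0 ≤ Plin k j i := by
  intro j hj i
  have hjk : ((j / 3 : ℕ) : ℝ) + 1 ≤ k := by exact_mod_cast (by omega : j / 3 + 1 ≤ k)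
  unfold Plin
  split_ifs <;> first | positivity | linarith

lemma Plin_unit (hk : 2 ≤ k) (i : Fin 2) : Plin k (3*k - 3) i = 1 := by
  unfold Plin
  rw [if_neg (by omega), if_neg (by omega), if_pos rfl]

lemma Plin_last (hk : 2 ≤ k) : Plin k (3*k - 2) 1 = 1 := by
  unfold Plin
  rw [if_neg (by omega), if_neg (by omega), if_neg (by omega), if_pos rfl, if_neg (by decide)]

lemma sSpeLin_unit (hk : 2 ≤ k) : sSpeLin k (3*k - 3) = 1 := by
  unfold sSpeLin
  rw [if_neg (by omega), if_neg (by omega), if_neg (by omega), if_pos rfl]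

lemma sSpeLin_last (hk : 2 ≤ k) : sSpeLin k (3*k - 2) = 1 := by
  unfold sSpeLin
  rw [if_neg (by omega), if_neg (by omega), if_neg (by omega), if_neg (by omega), if_pos rfl]

lemma sStarLin_last (hk : 2 ≤ k) : sStarLin k (3*k - 2) = 1 := by
  unfold sStarLin
  rw [if_neg (by omega), if_pos rfl]

lemma Plin_sSpeLin_eq_zero : ∀ j < 3*k - 1, j ∉ ({0, 1, 3*k - 3, 3*k - 2} : Finset ℕ) →
    Plin k j (sSpeLin k j) = 0 := by
  intro j hj hjT
  simp only [Finset.mem_insert, Finset.mem_singleton, not_or] at hjT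
  unfold sSpeLin Plin
  split_ifs <;> first | rfl | omega

lemma Plin_sStarLin_eq_zero : ∀ j < 3*k - 1, j ∉ ({3*k - 3, 3*k - 2} : Finset ℕ) →
    Plin k j (sStarLin k j) = 0 := by
  intro j hj hjT
  simp only [Finset.mem_insert, Finset.mem_singleton, not_or] at hjT
  unfold sStarLin Plin
  split_ifs <;> first | rfl | omega

lemma fMk_sSpeLin (hk : 2 ≤ k) : fMk (Plin k) (3*k - 1) (sSpeLin k) = k + 2 := by
  have hT : ({0, 1, 3*k - 3, 3*k - 2} : Finset ℕ) ⊆ range (3*k - 1) := by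
    simp [Finset.insert_subset_iff]; omega
  simp only [fMk, fLoad_eq_sum_of_support _ _ hT Plin_sSpeLin_eq_zero]
  have h0 : 0 ∉ ({1, 3*k - 3, 3*k - 2} : Finset ℕ) := by simp; omega
  have h1 : 1 ∉ ({3*k - 3, 3*k - 2} : Finset ℕ) := by simp; omega
  have h2 : 3*k - 3 ≠ 3*k - 2 := by omega
  simp only [Finset.sum_insert h0, Finset.sum_insert h1, Finset.sum_pair h2, sSpeLin_unit hk,
    sSpeLin_last hk, Plin_unit hk, Plin_last hk]
  norm_num [sSpeLin, Plin]

lemma fMk_sStarLin (hk : 2 ≤ k) : fMk (Plin k) (3*k - 1) (sStarLin k) = 1 := by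
  have hT : ({3*k - 3, 3*k - 2} : Finset ℕ) ⊆ range (3*k - 1) := by
    simp [Finset.insert_subset_iff]; omega
  simp only [fMk, fLoad_eq_sum_of_support _ _ hT Plin_sStarLin_eq_zero,
    Finset.sum_pair (by omega : 3*k - 3 ≠ 3*k - 2), sStarLin_last hk, Plin_unit hk, Plin_last hk]
  norm_num [sStarLin]

lemma optMk_Plin (hk : 2 ≤ k) : optMk (Plin k) (3*k - 1) = 1 := by
  refine optMk_eq_of_isLeast ⟨⟨sStarLin k, fMk_sStarLin hk⟩, ?_⟩
  rintro _ ⟨s, rfl⟩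
  simpa [Plin_unit hk] using apply_le_fMk (Plin_nonneg hk) s (j := 3*k - 3) (by omega)

/-- For every `k ≥ 2`, the above schedule has makespan `k + 2`, so its ratio to
the optimal makespan is `k + 2 = (n + 7)/3` with `n = 3k − 1`: linear in `n`. -/
theorem linear_lb_spe_makespan :
    ∀ k : ℕ, 2 ≤ k →
      fMk (Plin k) (3*k - 1) (sSpeLin k) = (k : ℝ) + 2 ∧
      fMk (Plin k) (3*k - 1) (sSpeLin k) / optMk (Plin k) (3*k - 1)
        = (((3*k : ℝ) - 1) + 7) / 3 := by
  intro k hk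
  refine ⟨fMk_sSpeLin hk, ?_⟩
  rw [fMk_sSpeLin hk, optMk_Plin hk, div_one]
  ring

end
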